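/- arXiv:math/0311351 — 9 statements merged into one kernel-verified Lean document; each statement's English description precedes it below -/
import Mathlib

section
/- Fix α ∈ (0,1). Let μ and μ_α be probability measures on [0,∞) with Laplace transforms φ and φ_α, and suppose φ(s) = φ(αs) · φ_α(s) for all s > 0. Then the functions P(s) = φ(1-s) and P_α(s) = φ_α(1-s) are PGFs on the non-negative lattice, and P(s) = P(1 - α + αs) · P_α(s) for all s ∈ (0,1). (Thus if φ is a class-L Laplace transform, the PGF P = φ(1-·) belongs to the discrete class-L of Steutel and van Harn.) -/
open MeasureTheory Real Set

/-- A probability generating function on the non-negative lattice. -/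
def IsPGF (P : ℝ → ℝ) : Prop :=
  ∃ p : ℕ → ℝ, (∀ n, 0 ≤ p n) ∧ (∑' n, p n) = 1 ∧
    ∀ s ∈ Set.Icc (0 : ℝ) 1, (∑' n, p n * s ^ n) = P s

lemma tsum_exp_aux (c : ℝ) : ∑' n : ℕ, c ^ n / (n.factorial : ℝ) = Real.exp c := by
  rw [Real.exp_eq_exp_ℝ, NormedSpace.exp_eq_tsum_div]

lemma isPGF_of_laplace (ν : Measure ℝ) [IsProbabilityMeasure ν] (hν : ν (Set.Iio 0) = 0)
    (ψ : ℝ → ℝ) (hψ : ∀ s, ψ s = ∫ x, Real.exp (-(s * x)) ∂ν) :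
    IsPGF (fun s => ψ (1 - s)) := by
  have hae : ∀ᵐ x ∂ν, 0 ≤ x := by
    rw [ae_iff]
    convert hν using 2
    ext x; simp [not_le]
  set p : ℕ → ℝ := fun n => ∫ x, Real.exp (-x) * x ^ n / (n.factorial : ℝ) ∂ν with hpdef
  have hnonneg : ∀ n, 0 ≤ p n := fun n =>
    integral_nonneg_of_ae (hae.mono fun x hx => by positivity)
  have key : ∀ s ∈ Set.Icc (0:ℝ) 1,
      ∑' n, p n * s ^ n = ∫ x, Real.exp (-((1 - s) * x)) ∂ν := by
    intro s hs
    have hterm : ∀ (n : ℕ) (x : ℝ), Real.exp (-x) * x ^ n / (n.factorial : ℝ) * s ^ n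
        = Real.exp (-x) * ((s * x) ^ n / (n.factorial : ℝ)) := fun n x => by
      rw [mul_pow]; ring
    have hsum : ∀ x : ℝ, Summable fun n : ℕ => Real.exp (-x) * x ^ n / (n.factorial : ℝ) * s ^ n := by
      intro x
      simp_rw [hterm]
      exact (Real.summable_pow_div_factorial (s * x)).mul_left _
    have hptw : ∀ x : ℝ, ∑' n : ℕ, Real.exp (-x) * x ^ n / (n.factorial : ℝ) * s ^ n
        = Real.exp (-((1 - s) * x)) := by
      intro x
      simp_rw [hterm]
      rw [tsum_mul_left, tsum_exp_aux, ← Real.exp_add]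
      ring_nf
    have hmeas : ∀ n : ℕ, Measurable
        (fun x : ℝ => Real.exp (-x) * x ^ n / (n.factorial : ℝ) * s ^ n) := fun n => by
      fun_prop
    have hgnonneg : ∀ᵐ x ∂ν, ∀ n : ℕ, 0 ≤ Real.exp (-x) * x ^ n / (n.factorial : ℝ) * s ^ n := by
      filter_upwards [hae] with x hx n
      have hs0 : 0 ≤ s := hs.1
      positivity
    have hfin : ∑' n : ℕ, ∫⁻ x, ‖Real.exp (-x) * x ^ n / (n.factorial : ℝ) * s ^ n‖₊ ∂ν ≠ ⊤ := by
      have h1 : ∀ n : ℕ, ∫⁻ x, ‖Real.exp (-x) * x ^ n / (n.factorial : ℝ) * s ^ n‖₊ ∂ν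
          = ∫⁻ x, ENNReal.ofReal (Real.exp (-x) * x ^ n / (n.factorial : ℝ) * s ^ n) ∂ν := by
        intro n
        refine lintegral_congr_ae ?_
        filter_upwards [hgnonneg] with x hx
        exact Real.enorm_eq_ofReal (hx n)
      have h2 : ∑' n : ℕ, ∫⁻ x, ENNReal.ofReal (Real.exp (-x) * x ^ n / (n.factorial : ℝ) * s ^ n) ∂ν
          = ∫⁻ x, ∑' n : ℕ, ENNReal.ofReal (Real.exp (-x) * x ^ n / (n.factorial : ℝ) * s ^ n) ∂ν :=
        (lintegral_tsum fun n => ((hmeas n).ennreal_ofReal).aemeasurable).symm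
      have h3 : ∫⁻ x, ∑' n : ℕ, ENNReal.ofReal (Real.exp (-x) * x ^ n / (n.factorial : ℝ) * s ^ n) ∂ν ≤ 1 := by
        have : ∫⁻ x, ∑' n : ℕ, ENNReal.ofReal (Real.exp (-x) * x ^ n / (n.factorial : ℝ) * s ^ n) ∂ν
            ≤ ∫⁻ _, 1 ∂ν := by
          refine lintegral_mono_ae ?_
          filter_upwards [hgnonneg, hae] with x hx hx0
          rw [← ENNReal.ofReal_tsum_of_nonneg hx (hsum x), hptw x]
          refine ENNReal.ofReal_le_one.2 (Real.exp_le_one_iff.2 ?_)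
          have : 0 ≤ (1 - s) * x := mul_nonneg (by linarith [hs.2]) hx0
          linarith
        simpa [lintegral_one, measure_univ] using this
      simp_rw [h1]
      rw [h2]
      exact ne_top_of_le_ne_top (by norm_num) h3
    have hswap := MeasureTheory.integral_tsum
      (f := fun (n : ℕ) (x : ℝ) => Real.exp (-x) * x ^ n / (n.factorial : ℝ) * s ^ n)
      (fun n => (hmeas n).aestronglyMeasurable) hfin
    have hpn : ∀ n : ℕ, p n * s ^ n = ∫ x, Real.exp (-x) * x ^ n / (n.factorial : ℝ) * s ^ n ∂ν := by
      intro n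
      rw [hpdef]
      exact (integral_mul_const _ _).symm
    calc ∑' n, p n * s ^ n
        = ∑' n, ∫ x, Real.exp (-x) * x ^ n / (n.factorial : ℝ) * s ^ n ∂ν := by simp_rw [hpn]
      _ = ∫ x, ∑' n : ℕ, Real.exp (-x) * x ^ n / (n.factorial : ℝ) * s ^ n ∂ν := hswap.symm
      _ = ∫ x, Real.exp (-((1 - s) * x)) ∂ν := by
          refine integral_congr_ae (Filter.Eventually.of_forall fun x => hptw x)
  refine ⟨p, hnonneg, ?_, ?_⟩
  · have h := key 1 ⟨zero_le_one, le_refl 1⟩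
    simpa [measure_univ] using h
  · intro s hs
    rw [key s hs]
    exact (hψ (1 - s)).symm

/-- If the Laplace transform `φ` of a probability measure on `[0,∞)` satisfies the
class-L factorization `φ(s) = φ(αs) φ_α(s)`, then `P = φ(1-·)` and `P_α = φ_α(1-·)`
are PGFs and `P(s) = P(1-α+αs) P_α(s)` on `(0,1)`: `P` is in discrete class-L. -/
theorem classL_implies_discrete_classL (α : ℝ) (hα : α ∈ Set.Ioo (0 : ℝ) 1)
    (μ μα : Measure ℝ) [IsProbabilityMeasure μ] [IsProbabilityMeasure μα]
    (hμ : μ (Set.Iio 0) = 0) (hμα : μα (Set.Iio 0) = 0)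
    (φ φα : ℝ → ℝ)
    (hφ : ∀ s, φ s = ∫ x, Real.exp (-(s * x)) ∂μ)
    (hφα : ∀ s, φα s = ∫ x, Real.exp (-(s * x)) ∂μα)
    (hL : ∀ s : ℝ, 0 < s → φ s = φ (α * s) * φα s)
    (P Pα : ℝ → ℝ) (hP : ∀ s, P s = φ (1 - s)) (hPα : ∀ s, Pα s = φα (1 - s)) :
    IsPGF P ∧ IsPGF Pα ∧
      ∀ s ∈ Set.Ioo (0 : ℝ) 1, P s = P (1 - α + α * s) * Pα s := by
  refine ⟨?_, ?_, ?_⟩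
  · have hPeq : P = fun s => φ (1 - s) := funext hP
    rw [hPeq]
    exact isPGF_of_laplace μ hμ φ hφ
  · have hPeq : Pα = fun s => φα (1 - s) := funext hPα
    rw [hPeq]
    exact isPGF_of_laplace μα hμα φα hφα
  · intro s hs
    have h1s : 0 < 1 - s := by linarith [hs.2]
    rw [hP, hP, hPα, hL (1 - s) h1s]
    congr 2
    ring
end

section
/- Let α ∈ (0,1], let n1, n2 ≥ 2 be integers and b1, b2 ∈ (0,1) satisfy n_i · b_i^α = 1 for i = 1,2, and suppose (log n1)/(log n2) is irrational. If ψ : (0,1) → ℝ is continuous and satisfies ψ(u) = n_i · ψ(b_i u) for all u ∈ (0,1) and i = 1,2, then there is a constant λ such that ψ(u) = λ u^α for all u ∈ (0,1). Consequently, a discrete random variable that can be expressed as a sum of n1 and also of n2 i.i.d. variables of its same D-type (with ratios b1, b2 respectively), with (log n1)/(log n2) irrational, is α-Poisson. -/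
open Real Set

/-! The function `g t = ψ t / t ^ α` is invariant under `t ↦ b₁ t` and `t ↦ b₂ t`, so `x ↦ g (exp x)`
on `x < 0` is invariant under the shifts by `log b₁` and `log b₂`. As
`log b₁ / log b₂ = log n₁ / log n₂` is irrational, these shifts generate a dense subgroup of `ℝ`,
and continuity forces `g` to be constant. -/

section OrderedGroup

variable {G β : Type*} [AddCommGroup G] [PartialOrder G] [IsOrderedAddMonoid G] {φ : G → β}

lemma apply_add_nsmul_eq_of_neg {c : G} (hc : c < 0) (hφ : ∀ x < 0, φ (x + c) = φ x)
    (n : ℕ) {x : G} (hx : x < 0) : φ (x + n • c) = φ x := by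
  induction n with
  | zero => simp
  | succ n ih =>
    have hxn : x + n • c < 0 := add_neg_of_neg_of_nonpos hx (nsmul_nonpos hc.le n)
    rw [succ_nsmul, ← add_assoc, hφ _ hxn, ih]

/-- Splitting the coefficients of `y - x = m • c + k • d` into positive and negative parts, both
`x` and `y` are moved by nonpositive shifts to a common point, so the shifts never leave `x < 0`. -/
lemma apply_eq_of_sub_mem_closure_pair {c d : G} (hc : c < 0) (hd : d < 0)
    (hφc : ∀ x < 0, φ (x + c) = φ x) (hφd : ∀ x < 0, φ (x + d) = φ x)
    {x y : G} (hx : x < 0) (hy : y < 0) (hxy : y - x ∈ AddSubgroup.closure {c, d}) :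
    φ y = φ x := by
  have shift : ∀ z < 0, ∀ p q : ℕ, φ (z + p • c + q • d) = φ z := fun z hz p q => by
    have hzp : z + p • c < 0 := add_neg_of_neg_of_nonpos hz (nsmul_nonpos hc.le p)
    rw [apply_add_nsmul_eq_of_neg hd hφd q hzp, apply_add_nsmul_eq_of_neg hc hφc p hz]
  have split : ∀ (m : ℤ) (e : G), m • e = m.toNat • e - (-m).toNat • e := fun m e => by
    nth_rw 1 [← Int.toNat_sub_toNat_neg m]
    rw [sub_zsmul, natCast_zsmul, natCast_zsmul, sub_eq_add_neg]
  obtain ⟨m, k, hmk⟩ := AddSubgroup.mem_closure_pair.1 hxy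
  have common : y + (-m).toNat • c + (-k).toNat • d = x + m.toNat • c + k.toNat • d := by
    rw [split, split] at hmk
    rw [← sub_eq_zero, ← neg_eq_zero, ← sub_eq_zero.2 hmk]
    abel
  rw [← shift y hy, common, shift x hx]

end OrderedGroup

theorem Real.exists_eqOn_const_Iio_of_add_invariant {β : Type*} [TopologicalSpace β] [T2Space β]
    {φ : ℝ → β} {c d : ℝ} (hc : c < 0) (hd : d < 0) (hirr : Irrational (c / d))
    (hφ : ContinuousOn φ (Iio 0))
    (hφc : ∀ x < 0, φ (x + c) = φ x) (hφd : ∀ x < 0, φ (x + d) = φ x) :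
    ∃ C, EqOn φ (fun _ => C) (Iio 0) := by
  have hdense : Dense ((· - (-1 : ℝ)) ⁻¹' (AddSubgroup.closure {c, d} : Set ℝ)) :=
    (dense_addSubgroupClosure_pair_iff.2 hirr).preimage (Homeomorph.subRight (-1 : ℝ)).isOpenMap
  refine ⟨φ (-1), EqOn.of_subset_closure ?_ hφ continuousOn_const inter_subset_left
    (hdense.open_subset_closure_inter isOpen_Iio)⟩
  rintro y ⟨hy, hxy⟩
  exact apply_eq_of_sub_mem_closure_pair hc hd hφc hφd (by norm_num) hy hxy

theorem Real.exists_eqOn_const_Ioo_of_mul_invariant {β : Type*} [TopologicalSpace β] [T2Space β]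
    {g : ℝ → β} {b₁ b₂ : ℝ} (hb₁ : b₁ ∈ Ioo 0 1) (hb₂ : b₂ ∈ Ioo 0 1)
    (hirr : Irrational (log b₁ / log b₂)) (hg : ContinuousOn g (Ioo 0 1))
    (hg₁ : ∀ t ∈ Ioo 0 1, g (b₁ * t) = g t) (hg₂ : ∀ t ∈ Ioo 0 1, g (b₂ * t) = g t) :
    ∃ C, EqOn g (fun _ => C) (Ioo 0 1) := by
  have hexp : MapsTo exp (Iio 0) (Ioo 0 1) := fun x hx => ⟨exp_pos x, exp_lt_one_iff.2 hx⟩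
  have hshift : ∀ b ∈ Ioo (0 : ℝ) 1, (∀ t ∈ Ioo 0 1, g (b * t) = g t) →
      ∀ x < 0, (g ∘ exp) (x + log b) = (g ∘ exp) x := fun b hb hgb x hx => by
    rw [Function.comp_apply, exp_add, exp_log hb.1, mul_comm]
    exact hgb _ (hexp hx)
  obtain ⟨C, hC⟩ := exists_eqOn_const_Iio_of_add_invariant (log_neg hb₁.1 hb₁.2)
    (log_neg hb₂.1 hb₂.2) hirr (hg.comp continuousOn_exp hexp) (hshift b₁ hb₁ hg₁)
    (hshift b₂ hb₂ hg₂)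
  refine ⟨C, fun t ht => ?_⟩
  simpa [exp_log ht.1] using hC (log_neg ht.1 ht.2)

lemma div_rpow_mul_eq_div_rpow {ψ : ℝ → ℝ} {n α b t : ℝ} (hb : 0 < b) (ht : 0 < t)
    (hnb : n * b ^ α = 1) (hψ : ψ t = n * ψ (b * t)) :
    ψ (b * t) / (b * t) ^ α = ψ t / t ^ α := by
  have hbα : 0 < b ^ α := rpow_pos_of_pos hb α
  have htα : 0 < t ^ α := rpow_pos_of_pos ht α
  rw [mul_rpow hb.le ht.le, hψ, div_eq_div_iff (by positivity) htα.ne']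
  linear_combination (-(ψ (b * t) * t ^ α)) * hnb

lemma log_eq_neg_mul_log_of_mul_rpow_eq_one {n b α : ℝ} (hb : 0 < b) (h : n * b ^ α = 1) :
    log n = -(α * log b) := by
  rw [eq_inv_of_mul_eq_one_left h, log_inv, log_rpow hb]

theorem two_scalings_irrational_implies_alpha_poisson_general (α : ℝ) (hα : α ∈ Set.Ioc (0 : ℝ) 1)
    (n1 n2 : ℕ)
    (b1 b2 : ℝ) (hb1 : b1 ∈ Set.Ioo (0 : ℝ) 1) (hb2 : b2 ∈ Set.Ioo (0 : ℝ) 1)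
    (h1 : (n1 : ℝ) * b1 ^ α = 1) (h2 : (n2 : ℝ) * b2 ^ α = 1)
    (hirr : Irrational (Real.log n1 / Real.log n2))
    (ψ : ℝ → ℝ) (hcont : ContinuousOn ψ (Set.Ioo 0 1))
    (hψ1 : ∀ u ∈ Set.Ioo (0 : ℝ) 1, ψ u = n1 * ψ (b1 * u))
    (hψ2 : ∀ u ∈ Set.Ioo (0 : ℝ) 1, ψ u = n2 * ψ (b2 * u)) :
    ∃ lam : ℝ, ∀ u ∈ Set.Ioo (0 : ℝ) 1, ψ u = lam * u ^ α := by
  have hg : ContinuousOn (fun t => ψ t / t ^ α) (Ioo 0 1) :=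
    hcont.div (continuousOn_id.rpow_const fun _ _ => Or.inr hα.1.le)
      fun t ht => (rpow_pos_of_pos ht.1 α).ne'
  have hratio : log n1 / log n2 = log b1 / log b2 := by
    rw [log_eq_neg_mul_log_of_mul_rpow_eq_one hb1.1 h1,
      log_eq_neg_mul_log_of_mul_rpow_eq_one hb2.1 h2, neg_div_neg_eq,
      mul_div_mul_left _ _ hα.1.ne']
  obtain ⟨lam, hlam⟩ := exists_eqOn_const_Ioo_of_mul_invariant hb1 hb2 (hratio ▸ hirr) hg
    (fun t ht => div_rpow_mul_eq_div_rpow hb1.1 ht.1 h1 (hψ1 t ht))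
    (fun t ht => div_rpow_mul_eq_div_rpow hb2.1 ht.1 h2 (hψ2 t ht))
  refine ⟨lam, fun u hu => ?_⟩
  rw [← show ψ u / u ^ α = lam from hlam hu, div_mul_cancel₀ _ (rpow_pos_of_pos hu.1 α).ne']

/-- If a continuous `ψ` on `(0,1)` satisfies the two semi-stable scaling relations
`ψ(u) = nᵢ ψ(bᵢ u)` with `nᵢ bᵢ^α = 1` and `(log n₁)/(log n₂)` irrational, then
`ψ(u) = λ u^α`; hence the corresponding discrete variable is α-Poisson. -/
theorem two_scalings_irrational_implies_alpha_poisson (α : ℝ) (hα : α ∈ Set.Ioc (0 : ℝ) 1)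
    (n1 n2 : ℕ) (hn1 : 2 ≤ n1) (hn2 : 2 ≤ n2)
    (b1 b2 : ℝ) (hb1 : b1 ∈ Set.Ioo (0 : ℝ) 1) (hb2 : b2 ∈ Set.Ioo (0 : ℝ) 1)
    (h1 : (n1 : ℝ) * b1 ^ α = 1) (h2 : (n2 : ℝ) * b2 ^ α = 1)
    (hirr : Irrational (Real.log n1 / Real.log n2))
    (ψ : ℝ → ℝ) (hcont : ContinuousOn ψ (Set.Ioo 0 1))
    (hψ1 : ∀ u ∈ Set.Ioo (0 : ℝ) 1, ψ u = n1 * ψ (b1 * u))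
    (hψ2 : ∀ u ∈ Set.Ioo (0 : ℝ) 1, ψ u = n2 * ψ (b2 * u)) :
    ∃ lam : ℝ, ∀ u ∈ Set.Ioo (0 : ℝ) 1, ψ u = lam * u ^ α :=
  two_scalings_irrational_implies_alpha_poisson_general α hα n1 n2 b1 b2 hb1 hb2 h1 h2 hirr ψ hcont
    hψ1 hψ2
end

section
/- Let b ∈ (0,1), α ∈ (0,1], λ > 0, and let P : (0,1) → (0,1] satisfy lim_{u→0+} (-log P(1-u))/u^α = λ. Then P(1-u) = (P(1-bu))^2 for all u ∈ (0,1) — i.e., a variable M with PGF P is distributed as the sum of two independent copies of the Bernoulli(b)-thinning of M — if and only if b^α = 1/2 and P(1-u) = exp(-λ u^α) for all u ∈ (0,1), i.e., M is α-Poisson(λ). -/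
open Real Set Filter

/-- A variable `M` with PGF `P` satisfying `-log P(1-u) / u^α → λ` as `u → 0⁺`
is distributed as the sum of two independent copies of its Bernoulli(b)-thinning,
i.e. `P(1-u) = (P(1-bu))²` on `(0,1)`, iff `b^α = 1/2` and `M` is
α-Poisson(λ), i.e. `P(1-u) = exp(-λ u^α)`. -/
theorem sum_two_thinnings_iff_alpha_poisson (b α lam : ℝ)
    (hb : b ∈ Set.Ioo (0 : ℝ) 1) (hα : α ∈ Set.Ioc (0 : ℝ) 1) (hlam : 0 < lam)
    (P : ℝ → ℝ) (hP : ∀ s ∈ Set.Ioo (0 : ℝ) 1, P s ∈ Set.Ioc (0 : ℝ) 1)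
    (hlim : Filter.Tendsto (fun u : ℝ => (-Real.log (P (1 - u))) / u ^ α)
      (nhdsWithin 0 (Set.Ioi 0)) (nhds lam)) :
    (∀ u ∈ Set.Ioo (0 : ℝ) 1, P (1 - u) = (P (1 - b * u)) ^ 2) ↔
      (b ^ α = 1 / 2 ∧
        ∀ u ∈ Set.Ioo (0 : ℝ) 1, P (1 - u) = Real.exp (-(lam * u ^ α))) := by
  obtain ⟨hb0, hb1⟩ := hb
  obtain ⟨hα0, hα1⟩ := hα
  have hbα : (0:ℝ) < b ^ α := Real.rpow_pos_of_pos hb0 α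
  constructor
  · intro hfun
    set f : ℝ → ℝ := fun u => -Real.log (P (1 - u)) with hfdef
    -- membership of the iterates
    have hmem : ∀ u ∈ Set.Ioo (0:ℝ) 1, ∀ n : ℕ, b ^ n * u ∈ Set.Ioo (0:ℝ) 1 := by
      intro u hu n
      have hbn : (0:ℝ) < b ^ n := pow_pos hb0 n
      have hbn1 : b ^ n ≤ 1 := pow_le_one₀ hb0.le hb1.le
      constructor
      · exact mul_pos hbn hu.1
      · calc b ^ n * u ≤ 1 * u := by nlinarith [hu.1]
          _ < 1 := by simpa using hu.2
    -- one step of the functional equation for f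
    have hstep : ∀ u ∈ Set.Ioo (0:ℝ) 1, f u = 2 * f (b * u) := by
      intro u hu
      have h := hfun u hu
      have : Real.log (P (1 - u)) = 2 * Real.log (P (1 - b * u)) := by
        rw [h, Real.log_pow]; push_cast; ring
      simp only [hfdef]
      linarith
    -- iterated functional equation
    have hiter : ∀ u ∈ Set.Ioo (0:ℝ) 1, ∀ n : ℕ, f u = 2 ^ n * f (b ^ n * u) := by
      intro u hu n
      induction n with
      | zero => simp
      | succ n ih =>
        have h1 : f (b ^ n * u) = 2 * f (b * (b ^ n * u)) := hstep _ (hmem u hu n)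
        have h2 : b * (b ^ n * u) = b ^ (n + 1) * u := by ring
        rw [ih, h1, h2]; ring
    -- the sequence b^n * u tends to 0 within (0, ∞)
    have hseq : ∀ u ∈ Set.Ioo (0:ℝ) 1,
        Tendsto (fun n : ℕ => f (b ^ n * u) / (b ^ n * u) ^ α) atTop (nhds lam) := by
      intro u hu
      have h1 : Tendsto (fun n : ℕ => b ^ n * u) atTop (nhds 0) := by
        have := (tendsto_pow_atTop_nhds_zero_of_lt_one hb0.le hb1).mul_const u
        simpa using this
      have h2 : Tendsto (fun n : ℕ => b ^ n * u) atTop (nhdsWithin 0 (Set.Ioi 0)) :=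
        tendsto_nhdsWithin_of_tendsto_nhds_of_eventually_within _ h1
          (Filter.Eventually.of_forall fun n => (hmem u hu n).1)
      exact hlim.comp h2
    -- f is nonzero on (0,1)
    have hfne : ∀ u ∈ Set.Ioo (0:ℝ) 1, f u ≠ 0 := by
      intro u hu hf0
      have hz : ∀ n : ℕ, f (b ^ n * u) = 0 := by
        intro n
        have := hiter u hu n
        rw [hf0] at this
        have h2 : (0:ℝ) < 2 ^ n := by positivity
        nlinarith
      have : Tendsto (fun n : ℕ => f (b ^ n * u) / (b ^ n * u) ^ α) atTop (nhds 0) := by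
        have : (fun n : ℕ => f (b ^ n * u) / (b ^ n * u) ^ α) = fun _ => 0 := by
          funext n; rw [hz n]; simp
        rw [this]; exact tendsto_const_nhds
      exact absurd (tendsto_nhds_unique (hseq u hu) this) hlam.ne'
    -- key identity: (2 b^α)^n * g(b^n u) = f u / u^α
    have hkey : ∀ u ∈ Set.Ioo (0:ℝ) 1, ∀ n : ℕ,
        (2 * b ^ α) ^ n * (f (b ^ n * u) / (b ^ n * u) ^ α) = f u / u ^ α := by
      intro u hu n
      have hbnpow : ((b:ℝ) ^ n) ^ α = (b ^ α) ^ n := by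
        rw [← Real.rpow_natCast b n, ← Real.rpow_natCast (b ^ α) n, ← Real.rpow_mul hb0.le,
          ← Real.rpow_mul hb0.le, mul_comm]
      have hmul : (b ^ n * u) ^ α = (b ^ α) ^ n * u ^ α := by
        rw [Real.mul_rpow (by positivity) hu.1.le, hbnpow]
      have huα : (0:ℝ) < u ^ α := Real.rpow_pos_of_pos hu.1 α
      have hbαn : (0:ℝ) < (b ^ α) ^ n := pow_pos hbα n
      rw [hmul, hiter u hu n, mul_pow]
      field_simp
    -- the geometric sequence (2 b^α)^n converges to a nonzero limit, hence 2 b^α = 1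
    have hr : 2 * b ^ α = 1 := by
      have hu : (1/2 : ℝ) ∈ Set.Ioo (0:ℝ) 1 := by norm_num
      set C : ℝ := f (1/2) / (1/2 : ℝ) ^ α with hC
      have huα : (0:ℝ) < (1/2:ℝ) ^ α := Real.rpow_pos_of_pos (by norm_num) α
      have hCne : C ≠ 0 := div_ne_zero (hfne _ hu) huα.ne'
      have hg := hseq _ hu
      -- eventually g n ≠ 0
      have hgev : ∀ᶠ n in atTop, f (b ^ n * (1/2)) / (b ^ n * (1/2)) ^ α ≠ 0 :=
        hg.eventually_ne hlam.ne'
      have hconv : Tendsto (fun n : ℕ => (2 * b ^ α) ^ n) atTop (nhds (C / lam)) := by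
        have h1 : Tendsto (fun n : ℕ => C / (f (b ^ n * (1/2)) / (b ^ n * (1/2)) ^ α))
            atTop (nhds (C / lam)) := tendsto_const_nhds.div hg hlam.ne'
        apply h1.congr'
        filter_upwards [hgev] with n hn
        rw [eq_comm, eq_div_iff hn, mul_comm, hC, ← hkey _ hu n]; ring
      have hCl : C / lam ≠ 0 := div_ne_zero hCne hlam.ne'
      rcases lt_trichotomy (2 * b ^ α) 1 with h | h | h
      · have h0 : Tendsto (fun n : ℕ => (2 * b ^ α) ^ n) atTop (nhds 0) :=
          tendsto_pow_atTop_nhds_zero_of_lt_one (by positivity) h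
        exact absurd (tendsto_nhds_unique hconv h0) hCl
      · exact h
      · exact absurd (tendsto_pow_atTop_atTop_of_one_lt h)
          (not_tendsto_atTop_of_tendsto_nhds hconv)
    have hbα2 : b ^ α = 1 / 2 := by linarith
    refine ⟨hbα2, fun u hu => ?_⟩
    -- with 2 b^α = 1, g is constant equal to f u / u^α, hence f u / u^α = lam
    have hconst : ∀ n : ℕ, f (b ^ n * u) / (b ^ n * u) ^ α = f u / u ^ α := by
      intro n
      have := hkey u hu n
      rwa [hr, one_pow, one_mul] at this
    have : Tendsto (fun n : ℕ => f (b ^ n * u) / (b ^ n * u) ^ α) atTop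
        (nhds (f u / u ^ α)) := by
      have heq : (fun n : ℕ => f (b ^ n * u) / (b ^ n * u) ^ α)
          = fun _ => f u / u ^ α := funext hconst
      rw [heq]; exact tendsto_const_nhds
    have hval : f u / u ^ α = lam := tendsto_nhds_unique this (hseq u hu)
    have huα : (0:ℝ) < u ^ α := Real.rpow_pos_of_pos hu.1 α
    have hfu : f u = lam * u ^ α := by
      field_simp at hval; linarith [hval]
    have hPpos : 0 < P (1 - u) := by
      have : 1 - u ∈ Set.Ioo (0:ℝ) 1 := ⟨by linarith [hu.2], by linarith [hu.1]⟩
      exact (hP _ this).1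
    have hlog : Real.log (P (1 - u)) = -(lam * u ^ α) := by
      simp only [hfdef] at hfu; linarith
    rw [← Real.exp_log hPpos, hlog]
  · rintro ⟨hbα2, hform⟩ u hu
    have hbu : b * u ∈ Set.Ioo (0:ℝ) 1 := by
      constructor
      · exact mul_pos hb0 hu.1
      · nlinarith [hu.1, hu.2]
    rw [hform u hu, hform (b * u) hbu, ← Real.exp_nat_mul]
    congr 1
    have : (b * u) ^ α = b ^ α * u ^ α := Real.mul_rpow hb0.le hu.1.le
    rw [this, hbα2]
    push_cast
    ring
end

section
/- Let b ∈ (0,1), α ∈ (0,1], λ > 0, let m, n be positive integers, and let P : (0,1) → (0,1] satisfy lim_{u→0+} (-log P(1-u))/u^α = λ. Then (P(1-u))^m = (P(1-bu))^n for all u ∈ (0,1) — i.e., the sum of m independent copies of M is distributed as the sum of n independent copies of the Bernoulli(b)-thinning of M — if and only if b^α = m/n and P(1-u) = exp(-λ u^α) for all u ∈ (0,1). In particular the equation forces n > m. -/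
open Real Set Filter Topology

/-
Writing `g u = -log P(1 - u) / u ^ α`, the equation `P(1-u)^m = P(1-bu)^n` says exactly that
`g (b u) = r g u` with `r = (m / n) / b ^ α`. Iterating along `b ^ k u → 0⁺` gives
`r ^ k g u → λ ≠ 0` for every `u`, which forces `r = 1` and `g u = λ`.
-/

lemma mul_mem_Ioo_zero_one {b u : ℝ} (hb : b ∈ Ioo (0 : ℝ) 1) (hu : u ∈ Ioo (0 : ℝ) 1) :
    b * u ∈ Ioo (0 : ℝ) 1 :=
  ⟨mul_pos hb.1 hu.1, mul_lt_one_of_nonneg_of_lt_one_left hb.1.le hb.2 hu.2.le⟩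

lemma pow_mul_mem_Ioo_zero_one {b u : ℝ} (hb : b ∈ Ioo (0 : ℝ) 1) (hu : u ∈ Ioo (0 : ℝ) 1)
    (k : ℕ) : b ^ k * u ∈ Ioo (0 : ℝ) 1 := by
  induction k with
  | zero => simpa using hu
  | succ k ih => simpa only [pow_succ', mul_assoc] using mul_mem_Ioo_zero_one hb ih

section Scaling

variable {g : ℝ → ℝ} {b r : ℝ}

lemma map_pow_mul_of_map_mul (hb : b ∈ Ioo (0 : ℝ) 1)
    (hg : ∀ u ∈ Ioo (0 : ℝ) 1, g (b * u) = r * g u) {u : ℝ} (hu : u ∈ Ioo (0 : ℝ) 1) (k : ℕ) :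
    g (b ^ k * u) = r ^ k * g u := by
  induction k with
  | zero => simp
  | succ k ih =>
    rw [pow_succ', mul_assoc, hg _ (pow_mul_mem_Ioo_zero_one hb hu k), ih, pow_succ', mul_assoc]

theorem eq_one_and_eqOn_of_map_mul_of_tendsto {lam : ℝ} (hb : b ∈ Ioo (0 : ℝ) 1)
    (hlam : lam ≠ 0) (hg : ∀ u ∈ Ioo (0 : ℝ) 1, g (b * u) = r * g u)
    (hlim : Tendsto g (𝓝[>] 0) (𝓝 lam)) : r = 1 ∧ ∀ u ∈ Ioo (0 : ℝ) 1, g u = lam := by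
  have hpow : ∀ u ∈ Ioo (0 : ℝ) 1, Tendsto (fun k : ℕ => r ^ k * g u) atTop (𝓝 lam) := by
    intro u hu
    have hto : Tendsto (fun k : ℕ => b ^ k * u) atTop (𝓝[>] 0) :=
      tendsto_nhdsWithin_iff.2
        ⟨by simpa using (tendsto_pow_atTop_nhds_zero_of_lt_one hb.1.le hb.2).mul_const u,
          Eventually.of_forall fun k => (pow_mul_mem_Ioo_zero_one hb hu k).1⟩
    simpa only [Function.comp_def, map_pow_mul_of_map_mul hb hg hu] using hlim.comp hto
  have hhalf : (1 / 2 : ℝ) ∈ Ioo (0 : ℝ) 1 := by norm_num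
  have hshift := (tendsto_add_atTop_iff_nat 1).2 (hpow _ hhalf)
  simp only [pow_succ', mul_assoc] at hshift
  have hr : r * lam = 1 * lam := (tendsto_nhds_unique ((hpow _ hhalf).const_mul r) hshift).trans
    (one_mul lam).symm
  have hr1 : r = 1 := mul_right_cancel₀ hlam hr
  refine ⟨hr1, fun u hu => ?_⟩
  have hconst := hpow u hu
  simp only [hr1, one_pow, one_mul] at hconst
  exact tendsto_nhds_unique tendsto_const_nhds hconst

end Scaling

lemma neg_log_div_rpow_map_mul {P : ℝ → ℝ} {b α : ℝ} {m n : ℕ} (hb : b ∈ Ioo (0 : ℝ) 1)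
    (hn : 0 < n) (H : ∀ u ∈ Ioo (0 : ℝ) 1, P (1 - u) ^ m = P (1 - b * u) ^ n) :
    ∀ u ∈ Ioo (0 : ℝ) 1, -log (P (1 - b * u)) / (b * u) ^ α =
      ((m : ℝ) / n / b ^ α) * (-log (P (1 - u)) / u ^ α) := by
  intro u hu
  have hlog := congrArg log (H u hu)
  rw [log_pow, log_pow] at hlog
  have hbα : 0 < b ^ α := rpow_pos_of_pos hb.1 α
  have huα : 0 < u ^ α := rpow_pos_of_pos hu.1 α
  have hn0 : (0 : ℝ) < n := by exact_mod_cast hn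
  rw [mul_rpow hb.1.le hu.1.le]
  field_simp
  linarith

lemma exp_neg_mul_rpow_pow_eq {lam α b u : ℝ} {m n : ℕ} (hb : 0 ≤ b) (hu : 0 ≤ u) (hn : n ≠ 0)
    (hbα : b ^ α = (m : ℝ) / n) :
    exp (-(lam * u ^ α)) ^ m = exp (-(lam * (b * u) ^ α)) ^ n := by
  rw [← exp_nat_mul, ← exp_nat_mul, mul_rpow hb hu, hbα]
  field_simp

lemma lt_of_rpow_eq_div {b α : ℝ} {m n : ℕ} (hb : b ∈ Ioo (0 : ℝ) 1) (hα : 0 < α)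
    (hn : 0 < n) (hbα : b ^ α = (m : ℝ) / n) : m < n := by
  have hlt : (m : ℝ) / n < 1 := hbα ▸ rpow_lt_one hb.1.le hb.2 hα
  exact_mod_cast (div_lt_one (by exact_mod_cast hn)).1 hlt

theorem m_copies_eq_n_thinnings_iff_alpha_poisson_general (b α lam : ℝ)
    (hb : b ∈ Set.Ioo (0 : ℝ) 1) (hα : α ∈ Set.Ioc (0 : ℝ) 1) (hlam : 0 < lam)
    (m n : ℕ) (hn : 0 < n)
    (P : ℝ → ℝ) (hP : ∀ s ∈ Set.Ioo (0 : ℝ) 1, P s ∈ Set.Ioc (0 : ℝ) 1)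
    (hlim : Filter.Tendsto (fun u : ℝ => (-Real.log (P (1 - u))) / u ^ α)
      (nhdsWithin 0 (Set.Ioi 0)) (nhds lam)) :
    ((∀ u ∈ Set.Ioo (0 : ℝ) 1, (P (1 - u)) ^ m = (P (1 - b * u)) ^ n) ↔
      (b ^ α = (m : ℝ) / n ∧
        ∀ u ∈ Set.Ioo (0 : ℝ) 1, P (1 - u) = Real.exp (-(lam * u ^ α)))) ∧
    ((∀ u ∈ Set.Ioo (0 : ℝ) 1, (P (1 - u)) ^ m = (P (1 - b * u)) ^ n) → m < n) := by
  have forward (H : ∀ u ∈ Ioo (0 : ℝ) 1, P (1 - u) ^ m = P (1 - b * u) ^ n) :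
      b ^ α = (m : ℝ) / n ∧ ∀ u ∈ Ioo (0 : ℝ) 1, P (1 - u) = exp (-(lam * u ^ α)) := by
    obtain ⟨hr, hconst⟩ := eq_one_and_eqOn_of_map_mul_of_tendsto hb hlam.ne'
      (neg_log_div_rpow_map_mul hb hn H) hlim
    refine ⟨((div_eq_one_iff_eq (rpow_pos_of_pos hb.1 α).ne').1 hr).symm, fun u hu => ?_⟩
    have hPu : 0 < P (1 - u) := (hP _ ⟨by linarith [hu.2], by linarith [hu.1]⟩).1
    have hlog : log (P (1 - u)) = -(lam * u ^ α) := by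
      rw [← hconst u hu, div_mul_cancel₀ _ (rpow_pos_of_pos hu.1 α).ne', neg_neg]
    rw [← exp_log hPu, hlog]
  refine ⟨⟨forward, fun ⟨hbα, hform⟩ u hu => ?_⟩,
    fun H => lt_of_rpow_eq_div hb hα.1 hn (forward H).1⟩
  rw [hform u hu, hform _ (mul_mem_Ioo_zero_one hb hu)]
  exact exp_neg_mul_rpow_pow_eq hb.1.le hu.1.le hn.ne' hbα

/-- The sum of `m` independent copies of `M` is distributed as the sum of `n`
independent copies of the Bernoulli(b)-thinning of `M`, i.e.
`(P(1-u))^m = (P(1-bu))^n` on `(0,1)`, iff `b^α = m/n` and `M` is α-Poisson(λ).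
In particular the equation forces `n > m`. -/
theorem m_copies_eq_n_thinnings_iff_alpha_poisson (b α lam : ℝ)
    (hb : b ∈ Set.Ioo (0 : ℝ) 1) (hα : α ∈ Set.Ioc (0 : ℝ) 1) (hlam : 0 < lam)
    (m n : ℕ) (hm : 0 < m) (hn : 0 < n)
    (P : ℝ → ℝ) (hP : ∀ s ∈ Set.Ioo (0 : ℝ) 1, P s ∈ Set.Ioc (0 : ℝ) 1)
    (hlim : Filter.Tendsto (fun u : ℝ => (-Real.log (P (1 - u))) / u ^ α)
      (nhdsWithin 0 (Set.Ioi 0)) (nhds lam)) :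
    ((∀ u ∈ Set.Ioo (0 : ℝ) 1, (P (1 - u)) ^ m = (P (1 - b * u)) ^ n) ↔
      (b ^ α = (m : ℝ) / n ∧
        ∀ u ∈ Set.Ioo (0 : ℝ) 1, P (1 - u) = Real.exp (-(lam * u ^ α)))) ∧
    ((∀ u ∈ Set.Ioo (0 : ℝ) 1, (P (1 - u)) ^ m = (P (1 - b * u)) ^ n) → m < n) :=
  m_copies_eq_n_thinnings_iff_alpha_poisson_general b α lam hb hα hlam m n hn P hP hlim
end

section
/- Let p, b ∈ (0,1), let ψ : (0,1) → [0,∞), and define P(s) = 1/(1 + ψ(1-s)) for s ∈ (0,1). Then P(s) = p·P(1-b+bs) / (1 - (1-p)·P(1-b+bs)) for all s ∈ (0,1) — i.e., P is the geometric(p) compound of its own same-D-type PGF Q(s) = P(1-b+bs) — if and only if ψ(u) = (1/p)·ψ(bu) for all u ∈ (0,1), i.e., if and only if P is DSML(1/p, b, α). -/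
open Real Set

lemma key_alg (p A B : ℝ) (hp0 : 0 < p) (hp1 : p < 1) (hA : 0 ≤ A) (hB : 0 ≤ B) :
    1 / (1 + A) = p * (1 / (1 + B)) / (1 - (1 - p) * (1 / (1 + B))) ↔ A = (1 / p) * B := by
  have hA1 : (0:ℝ) < 1 + A := by linarith
  have hB1 : (0:ℝ) < 1 + B := by linarith
  have hpB : (0:ℝ) < p + B := by linarith
  have hden : 1 - (1 - p) * (1 / (1 + B)) = (p + B) / (1 + B) := by
    field_simp; ring
  rw [hden]
  rw [div_eq_div_iff (by positivity) (by positivity : ((p+B)/(1+B)) ≠ 0)]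
  constructor
  · intro h
    have h' : p + B = p * (1 + A) := by
      field_simp at h; nlinarith
    field_simp
    linarith
  · intro h
    have hpA : p * A = B := by rw [h]; field_simp
    field_simp
    nlinarith [hpA]

/-- A discrete r.v. is a geometric(p) sum of its own D-type variables iff it is
DSML(1/p, b, α): with `P(s) = 1/(1+ψ(1-s))`, the identity
`P(s) = pP(1-b+bs)/(1-(1-p)P(1-b+bs))` on `(0,1)` holds iff `ψ(u) = (1/p)ψ(bu)`. -/
theorem geometric_sum_same_Dtype_iff_DSML (p b : ℝ)
    (hp : p ∈ Set.Ioo (0 : ℝ) 1) (hb : b ∈ Set.Ioo (0 : ℝ) 1)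
    (ψ : ℝ → ℝ) (hψ : ∀ u ∈ Set.Ioo (0 : ℝ) 1, 0 ≤ ψ u)
    (P : ℝ → ℝ) (hP : ∀ s ∈ Set.Ioo (0 : ℝ) 1, P s = 1 / (1 + ψ (1 - s))) :
    (∀ s ∈ Set.Ioo (0 : ℝ) 1,
        P s = p * P (1 - b + b * s) / (1 - (1 - p) * P (1 - b + b * s))) ↔
      ∀ u ∈ Set.Ioo (0 : ℝ) 1, ψ u = (1 / p) * ψ (b * u) := by
  obtain ⟨hp0, hp1⟩ := hp
  obtain ⟨hb0, hb1⟩ := hb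
  have hmem : ∀ s ∈ Set.Ioo (0:ℝ) 1, (1 - b + b * s) ∈ Set.Ioo (0:ℝ) 1 := by
    intro s hs
    obtain ⟨hs0, hs1⟩ := hs
    constructor <;> nlinarith
  have hmain : ∀ s ∈ Set.Ioo (0:ℝ) 1,
      (P s = p * P (1 - b + b * s) / (1 - (1 - p) * P (1 - b + b * s))) ↔
        ψ (1 - s) = (1 / p) * ψ (b * (1 - s)) := by
    intro s hs
    obtain ⟨hs0, hs1⟩ := hs
    have hbu : b * (1 - s) ∈ Set.Ioo (0:ℝ) 1 := by
      constructor <;> nlinarith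
    have hu : (1 - s) ∈ Set.Ioo (0:ℝ) 1 := ⟨by linarith, by linarith⟩
    rw [hP s ⟨hs0, hs1⟩, hP _ (hmem s ⟨hs0, hs1⟩)]
    have harg : 1 - (1 - b + b * s) = b * (1 - s) := by ring
    rw [harg]
    exact key_alg p _ _ hp0 hp1 (hψ _ hu) (hψ _ hbu)
  constructor
  · intro h u hu
    obtain ⟨hu0, hu1⟩ := hu
    have hs : (1 - u) ∈ Set.Ioo (0:ℝ) 1 := ⟨by linarith, by linarith⟩
    have := (hmain (1 - u) hs).mp (h (1 - u) hs)
    simpa using this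
  · intro h s hs
    obtain ⟨hs0, hs1⟩ := hs
    exact (hmain s ⟨hs0, hs1⟩).mpr (h (1 - s) ⟨by linarith, by linarith⟩)
end

section
/- Let α ∈ (0,1], let p1, p2, b1, b2 ∈ (0,1) satisfy b_i^α = p_i for i = 1,2, and suppose (log p1)/(log p2) is irrational. If ψ : (0,1) → [0,∞) is continuous and satisfies ψ(u) = (1/p_i)·ψ(b_i u) for all u ∈ (0,1) and i = 1,2, then there is a constant λ ≥ 0 such that ψ(u) = λ u^α for all u ∈ (0,1). Consequently, a discrete random variable that is a geometric(p) sum of variables of its own D-type for two values p1, p2 of p with (log p1)/(log p2) irrational is discrete Mittag-Leffler DML(λ,α). -/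
open Real Set

/-- If a continuous nonnegative `ψ` on `(0,1)` satisfies the two semi-Mittag-Leffler
scaling relations `ψ(u) = (1/pᵢ) ψ(bᵢ u)` with `bᵢ^α = pᵢ` and `(log p₁)/(log p₂)`
irrational, then `ψ(u) = λ u^α` for some `λ ≥ 0`; hence a discrete r.v. that is a
geometric(p) sum of its own D-type variables for two such values of `p` is DML(λ,α). -/
theorem two_geometric_compoundings_implies_DML (α : ℝ) (hα : α ∈ Set.Ioc (0 : ℝ) 1)
    (p1 p2 b1 b2 : ℝ)
    (hp1 : p1 ∈ Set.Ioo (0 : ℝ) 1) (hp2 : p2 ∈ Set.Ioo (0 : ℝ) 1)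
    (hb1 : b1 ∈ Set.Ioo (0 : ℝ) 1) (hb2 : b2 ∈ Set.Ioo (0 : ℝ) 1)
    (h1 : b1 ^ α = p1) (h2 : b2 ^ α = p2)
    (hirr : Irrational (Real.log p1 / Real.log p2))
    (ψ : ℝ → ℝ) (hpos : ∀ u ∈ Set.Ioo (0 : ℝ) 1, 0 ≤ ψ u)
    (hcont : ContinuousOn ψ (Set.Ioo 0 1))
    (hψ1 : ∀ u ∈ Set.Ioo (0 : ℝ) 1, ψ u = (1 / p1) * ψ (b1 * u))
    (hψ2 : ∀ u ∈ Set.Ioo (0 : ℝ) 1, ψ u = (1 / p2) * ψ (b2 * u)) :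
    ∃ lam : ℝ, 0 ≤ lam ∧ ∀ u ∈ Set.Ioo (0 : ℝ) 1, ψ u = lam * u ^ α := by
  obtain ⟨hα0, hα1⟩ := hα
  set T1 := Real.log b1 with hT1def
  set T2 := Real.log b2 with hT2def
  have hT1neg : T1 < 0 := Real.log_neg hb1.1 hb1.2
  have hT2neg : T2 < 0 := Real.log_neg hb2.1 hb2.2
  have hlog1 : Real.log p1 = α * T1 := by rw [← h1, Real.log_rpow hb1.1]
  have hlog2 : Real.log p2 = α * T2 := by rw [← h2, Real.log_rpow hb2.1]
  have hratio : Irrational (T1 / T2) := by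
    have e : Real.log p1 / Real.log p2 = T1 / T2 := by
      rw [hlog1, hlog2, mul_div_mul_left _ _ (ne_of_gt hα0)]
    rwa [e] at hirr
  set h : ℝ → ℝ := fun t => ψ (Real.exp t) / Real.exp (α * t) with hh
  have hmem : ∀ t : ℝ, t < 0 → Real.exp t ∈ Set.Ioo (0 : ℝ) 1 :=
    fun t ht => ⟨Real.exp_pos t, Real.exp_lt_one_iff.2 ht⟩
  -- single shifts
  have shift1 : ∀ t : ℝ, t < 0 → h (t + T1) = h t := by
    intro t ht
    have key := hψ1 _ (hmem t ht)
    have hexp : Real.exp (t + T1) = b1 * Real.exp t := by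
      rw [Real.exp_add, hT1def, Real.exp_log hb1.1]; ring
    have hexp2 : Real.exp (α * (t + T1)) = Real.exp (α * t) * p1 := by
      rw [mul_add, Real.exp_add, ← hlog1, Real.exp_log hp1.1]
    simp only [hh]
    rw [hexp, hexp2, key]
    field_simp
  have shift2 : ∀ t : ℝ, t < 0 → h (t + T2) = h t := by
    intro t ht
    have key := hψ2 _ (hmem t ht)
    have hexp : Real.exp (t + T2) = b2 * Real.exp t := by
      rw [Real.exp_add, hT2def, Real.exp_log hb2.1]; ring
    have hexp2 : Real.exp (α * (t + T2)) = Real.exp (α * t) * p2 := by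
      rw [mul_add, Real.exp_add, ← hlog2, Real.exp_log hp2.1]
    simp only [hh]
    rw [hexp, hexp2, key]
    field_simp
  -- natural iterations
  have natstep : ∀ (m n : ℕ) (t : ℝ), t < 0 →
      h (t + (m : ℝ) * T1 + (n : ℝ) * T2) = h t := by
    intro m
    induction m with
    | zero =>
      intro n
      induction n with
      | zero => intro t ht; norm_num
      | succ k ih =>
        intro t ht
        have ht2 : t + T2 < 0 := by linarith
        have e : t + ((0 : ℕ) : ℝ) * T1 + (((k + 1 : ℕ)) : ℝ) * T2
            = (t + T2) + ((0 : ℕ) : ℝ) * T1 + ((k : ℕ) : ℝ) * T2 := by push_cast; ring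
        rw [e, ih (t + T2) ht2, shift2 t ht]
    | succ m ih =>
      intro n t ht
      have ht1 : t + T1 < 0 := by linarith
      have e : t + (((m + 1 : ℕ)) : ℝ) * T1 + ((n : ℕ) : ℝ) * T2
          = (t + T1) + ((m : ℕ) : ℝ) * T1 + ((n : ℕ) : ℝ) * T2 := by push_cast; ring
      rw [e, ih n (t + T1) ht1, shift1 t ht]
  -- integer combinations
  have intstep : ∀ (M N : ℤ) (t : ℝ), t < 0 → t + (M : ℝ) * T1 + (N : ℝ) * T2 < 0 →
      h (t + (M : ℝ) * T1 + (N : ℝ) * T2) = h t := by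
    intro M N t ht ht'
    have key1 := natstep M.toNat N.toNat t ht
    have key2 := natstep (-M).toNat (-N).toNat (t + (M : ℝ) * T1 + (N : ℝ) * T2) ht'
    have hM : ((M.toNat : ℝ)) - (((-M).toNat : ℝ)) = (M : ℝ) := by
      have : ((M.toNat : ℤ)) - (((-M).toNat : ℤ)) = M := by omega
      exact_mod_cast congrArg (fun z : ℤ => (z : ℝ)) this
    have hN : ((N.toNat : ℝ)) - (((-N).toNat : ℝ)) = (N : ℝ) := by
      have : ((N.toNat : ℤ)) - (((-N).toNat : ℤ)) = N := by omega
      exact_mod_cast congrArg (fun z : ℤ => (z : ℝ)) this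
    have e : (t + (M : ℝ) * T1 + (N : ℝ) * T2) + ((-M).toNat : ℝ) * T1 + ((-N).toNat : ℝ) * T2
        = t + (M.toNat : ℝ) * T1 + (N.toNat : ℝ) * T2 := by
      linear_combination (-T1) * hM + (-T2) * hN
    rw [e] at key2
    exact key2.symm.trans key1
  -- density of the subgroup generated by T1, T2
  have hdense : Dense ((AddSubgroup.closure {T1, T2} : AddSubgroup ℝ) : Set ℝ) := by
    rcases AddSubgroup.dense_or_cyclic (AddSubgroup.closure {T1, T2}) with hd | ⟨a, ha⟩
    · exact hd
    · exfalso
      have hT1m : T1 ∈ AddSubgroup.closure ({T1, T2} : Set ℝ) :=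
        AddSubgroup.subset_closure (by simp)
      have hT2m : T2 ∈ AddSubgroup.closure ({T1, T2} : Set ℝ) :=
        AddSubgroup.subset_closure (by simp)
      rw [ha, AddSubgroup.mem_closure_singleton] at hT1m hT2m
      obtain ⟨m, hm⟩ := hT1m
      obtain ⟨n, hn⟩ := hT2m
      rw [zsmul_eq_mul] at hm hn
      have ha0 : a ≠ 0 := by
        rintro rfl
        rw [mul_zero] at hn
        exact hT2neg.ne hn.symm
      have hn0 : (n : ℝ) ≠ 0 := by
        rintro h0
        rw [h0, zero_mul] at hn
        exact hT2neg.ne hn.symm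
      apply hratio
      refine ⟨(m : ℚ) / (n : ℚ), ?_⟩
      rw [← hm, ← hn, mul_div_mul_right _ _ ha0]
      push_cast
      ring
  -- h is continuous on (-∞, 0)
  have hconth : ContinuousOn h (Set.Iio (0 : ℝ)) := by
    apply ContinuousOn.div
    · exact hcont.comp Real.continuous_exp.continuousOn (fun t ht => hmem t ht)
    · exact (Real.continuous_exp.comp (continuous_const.mul continuous_id)).continuousOn
    · intro t _; exact (Real.exp_pos _).ne'
  have hc : 2 * T1 < 0 := by linarith
  -- h is constant on (-∞,0)
  have key : ∀ s : ℝ, s < 0 → h s = h (2 * T1) := by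
    intro s hs
    have hseq : ∀ k : ℕ, ∃ x : ℝ, h x = h s ∧ x < 0 ∧ dist x (2 * T1) ≤ 1 / ((k : ℝ) + 1) := by
      intro k
      have hδpos : (0 : ℝ) < min (1 / ((k : ℝ) + 1)) (-T1 / 2) :=
        lt_min (by positivity) (by linarith)
      have hcl := hdense (2 * T1 - s)
      rw [Metric.mem_closure_iff] at hcl
      obtain ⟨g, hg, hdist⟩ := hcl _ hδpos
      rw [SetLike.mem_coe, AddSubgroup.mem_closure_pair] at hg
      obtain ⟨M, N, hMN⟩ := hg
      have hgval : g = (M : ℝ) * T1 + (N : ℝ) * T2 := by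
        rw [← hMN, zsmul_eq_mul, zsmul_eq_mul]
      have hxval : s + (M : ℝ) * T1 + (N : ℝ) * T2 = s + g := by rw [hgval]; ring
      have hsmall : |2 * T1 - s - g| < min (1 / ((k : ℝ) + 1)) (-T1 / 2) := by
        rwa [Real.dist_eq] at hdist
      have h1' : |2 * T1 - s - g| < -T1 / 2 := lt_of_lt_of_le hsmall (min_le_right _ _)
      have h2' : |2 * T1 - s - g| < 1 / ((k : ℝ) + 1) := lt_of_lt_of_le hsmall (min_le_left _ _)
      obtain ⟨ha', hb'⟩ := abs_lt.1 h1'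
      have hxneg : s + g < 0 := by linarith
      refine ⟨s + g, ?_, hxneg, ?_⟩
      · rw [← hxval]
        exact intstep M N s hs (hxval ▸ hxneg)
      · rw [Real.dist_eq, abs_sub_comm]
        have e2 : 2 * T1 - (s + g) = 2 * T1 - s - g := by ring
        rw [e2]
        exact h2'.le
    choose x hx hxneg hxdist using hseq
    have htend : Filter.Tendsto x Filter.atTop (nhds (2 * T1)) := by
      rw [tendsto_iff_dist_tendsto_zero]
      exact squeeze_zero (fun k => dist_nonneg) hxdist
        tendsto_one_div_add_atTop_nhds_zero_nat
    have htend' : Filter.Tendsto (fun k => h (x k)) Filter.atTop (nhds (h (2 * T1))) := by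
      have hcw : ContinuousWithinAt h (Set.Iio 0) (2 * T1) := hconth _ hc
      exact hcw.tendsto.comp
        (tendsto_nhdsWithin_of_tendsto_nhds_of_eventually_within _ htend
          (Filter.Eventually.of_forall hxneg))
    have hconst : Filter.Tendsto (fun k => h (x k)) Filter.atTop (nhds (h s)) := by
      simp only [hx]; exact tendsto_const_nhds
    exact tendsto_nhds_unique hconst htend'
  refine ⟨h (2 * T1), ?_, ?_⟩
  · have hval0 : h (2 * T1) = ψ (Real.exp (2 * T1)) / Real.exp (α * (2 * T1)) := by
      simp only [hh]
    rw [hval0]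
    exact div_nonneg (hpos _ (hmem _ hc)) (Real.exp_pos _).le
  · intro u hu
    have hlu : Real.log u < 0 := Real.log_neg hu.1 hu.2
    have hkey := key (Real.log u) hlu
    have hval : h (Real.log u) = ψ u / Real.exp (α * Real.log u) := by
      simp only [hh]; rw [Real.exp_log hu.1]
    rw [hval] at hkey
    rw [Real.rpow_def_of_pos hu.1, mul_comm (Real.log u) α]
    rw [div_eq_iff (Real.exp_pos _).ne'] at hkey
    linarith [hkey]
end

section
/- Let α ∈ (0,1] and λ > 0, and let P : (0,1) → (0,1] satisfy lim_{s→1^-} (1 - P(s))/(1-s)^α = λ. For p ∈ (0,1) define P_p(s) = p·P(1 - p^{1/α}(1-s)) / (1 - (1-p)·P(1 - p^{1/α}(1-s))). Then for every fixed s ∈ (0,1), lim_{p→0+} P_p(s) = 1/(1 + λ(1-s)^α). That is, the geometric(p) sum of i.i.d. Bernoulli(p^{1/α})-thinnings of M converges in distribution, as p → 0, to the discrete Mittag-Leffler law DML(λ,α). -/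
open Real Set Filter Topology

/-- If `(1 - P(s))/(1-s)^α → λ` as `s → 1⁻`, then the geometric(p) sum of i.i.d.
Bernoulli(p^{1/α})-thinnings of `M`, which has PGF
`P_p(s) = pP(1-p^{1/α}(1-s))/(1-(1-p)P(1-p^{1/α}(1-s)))`, converges as `p → 0⁺`
to the discrete Mittag-Leffler law DML(λ,α) with PGF `1/(1+λ(1-s)^α)`. -/
theorem geometric_sum_thinnings_tendsto_DML (α lam : ℝ)
    (hα : α ∈ Set.Ioc (0 : ℝ) 1) (hlam : 0 < lam)
    (P : ℝ → ℝ) (hP : ∀ s ∈ Set.Ioo (0 : ℝ) 1, P s ∈ Set.Ioc (0 : ℝ) 1)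
    (hlim : Filter.Tendsto (fun s : ℝ => (1 - P s) / (1 - s) ^ α)
      (nhdsWithin 1 (Set.Iio 1)) (nhds lam))
    (s : ℝ) (hs : s ∈ Set.Ioo (0 : ℝ) 1) :
    Filter.Tendsto
      (fun p : ℝ =>
        p * P (1 - p ^ (1 / α) * (1 - s)) /
          (1 - (1 - p) * P (1 - p ^ (1 / α) * (1 - s))))
      (nhdsWithin 0 (Set.Ioi 0)) (nhds (1 / (1 + lam * (1 - s) ^ α))) := by
  obtain ⟨hα0, hα1⟩ := hα
  obtain ⟨hs0, hs1⟩ := hs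
  have hs1' : 0 < 1 - s := by linarith
  set g : ℝ → ℝ := fun p => 1 - p ^ (1 / α) * (1 - s) with hgdef
  have hexp : (0 : ℝ) < 1 / α := by positivity
  -- p^(1/α) → 0
  have hrpow : Tendsto (fun p : ℝ => p ^ (1 / α)) (𝓝[>] (0 : ℝ)) (𝓝 0) := by
    have hc : ContinuousAt (fun p : ℝ => p ^ (1 / α)) 0 :=
      Real.continuousAt_rpow_const 0 (1 / α) (Or.inr hexp.le)
    have h2 : Tendsto (fun p : ℝ => p ^ (1 / α)) (𝓝[>] (0:ℝ)) (𝓝 ((0:ℝ) ^ (1 / α))) :=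
      hc.tendsto.mono_left nhdsWithin_le_nhds
    rwa [Real.zero_rpow (ne_of_gt hexp)] at h2
  have hg0 : Tendsto g (𝓝[>] (0 : ℝ)) (𝓝 1) := by
    have : Tendsto (fun p : ℝ => 1 - p ^ (1 / α) * (1 - s)) (𝓝[>] (0 : ℝ))
        (𝓝 (1 - 0 * (1 - s))) := (tendsto_const_nhds.sub (hrpow.mul_const _))
    rw [show (1:ℝ) - 0 * (1 - s) = 1 by ring] at this
    exact this
  have hglt : ∀ᶠ p in 𝓝[>] (0 : ℝ), g p < 1 := by
    filter_upwards [self_mem_nhdsWithin] with p hp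
    have hp' : (0 : ℝ) < p := hp
    have : 0 < p ^ (1 / α) * (1 - s) := by positivity
    simp only [hgdef]; linarith
  have hggt : ∀ᶠ p in 𝓝[>] (0 : ℝ), 0 < g p := by
    have := hg0.eventually (eventually_gt_nhds (by norm_num : (0:ℝ) < 1))
    filter_upwards [this] with p hp using hp
  have hg1 : Tendsto g (𝓝[>] (0 : ℝ)) (𝓝[<] (1 : ℝ)) :=
    tendsto_nhdsWithin_of_tendsto_nhds_of_eventually_within _ hg0 hglt
  -- key : (1 - P (g p)) / p → lam * (1-s)^α
  have hcomp : Tendsto (fun p => (1 - P (g p)) / (1 - g p) ^ α) (𝓝[>] (0 : ℝ)) (𝓝 lam) :=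
    hlim.comp hg1
  have heq1 : ∀ᶠ p in 𝓝[>] (0 : ℝ),
      (1 - P (g p)) / (1 - g p) ^ α * (1 - s) ^ α = (1 - P (g p)) / p := by
    filter_upwards [self_mem_nhdsWithin] with p hp
    have hp' : (0 : ℝ) < p := hp
    have h1g : 1 - g p = p ^ (1 / α) * (1 - s) := by simp [hgdef]
    have hpow : (1 - g p) ^ α = p * (1 - s) ^ α := by
      rw [h1g, Real.mul_rpow (by positivity) hs1'.le, ← Real.rpow_mul hp'.le,
        one_div_mul_cancel (ne_of_gt hα0), Real.rpow_one]
    rw [hpow]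
    have hA : (1 - s) ^ α ≠ 0 := by positivity
    field_simp
  have key : Tendsto (fun p => (1 - P (g p)) / p) (𝓝[>] (0 : ℝ)) (𝓝 (lam * (1 - s) ^ α)) :=
    Tendsto.congr' heq1 (hcomp.mul_const _)
  -- P (g p) → 1
  have hP1 : Tendsto (fun p => P (g p)) (𝓝[>] (0 : ℝ)) (𝓝 1) := by
    have h0 : Tendsto (fun p => (1 - P (g p)) / p * p) (𝓝[>] (0 : ℝ)) (𝓝 (lam * (1 - s) ^ α * 0)) :=
      key.mul (tendsto_nhdsWithin_of_tendsto_nhds tendsto_id)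
    have h0' : Tendsto (fun p => 1 - P (g p)) (𝓝[>] (0 : ℝ)) (𝓝 0) := by
      rw [show lam * (1 - s) ^ α * 0 = 0 by ring] at h0
      refine h0.congr' ?_
      filter_upwards [self_mem_nhdsWithin] with p hp
      exact div_mul_cancel₀ _ (ne_of_gt hp)
    have h3 : Tendsto (fun p => 1 - (1 - P (g p))) (𝓝[>] (0:ℝ)) (𝓝 (1 - 0)) :=
      (tendsto_const_nhds : Tendsto (fun _ : ℝ => (1:ℝ)) _ _).sub h0'
    simpa using h3
  have hne : lam * (1 - s) ^ α + 1 ≠ 0 := by positivity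
  have hfin : Tendsto (fun p => P (g p) / ((1 - P (g p)) / p + P (g p))) (𝓝[>] (0 : ℝ))
      (𝓝 (1 / (lam * (1 - s) ^ α + 1))) := hP1.div (key.add hP1) hne
  have heq2 : ∀ᶠ p in 𝓝[>] (0 : ℝ),
      P (g p) / ((1 - P (g p)) / p + P (g p)) =
        p * P (g p) / (1 - (1 - p) * P (g p)) := by
    filter_upwards [self_mem_nhdsWithin] with p hp
    have hp' : (0 : ℝ) < p := hp
    have hd : 1 - (1 - p) * P (g p) = p * ((1 - P (g p)) / p + P (g p)) := by
      field_simp; ring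
    rw [hd, mul_div_mul_left _ _ (ne_of_gt hp')]
  have := Tendsto.congr' heq2 hfin
  have hcomm : 1 / (lam * (1 - s) ^ α + 1) = 1 / (1 + lam * (1 - s) ^ α) := by
    rw [add_comm]
  rw [hcomm] at this
  exact this
end

section
/- Let b, p ∈ (0,1), α ∈ (0,1], λ > 0, and let P : (0,1) → (0,1] satisfy lim_{s→1^-} (1 - P(s))/(1-s)^α = λ. Then P(s) = p·P(1-b+bs) / (1 - (1-p)·P(1-b+bs)) for all s ∈ (0,1) — i.e., a variable M with PGF P is distributed as a geometric(p) sum of i.i.d. Bernoulli(b)-thinnings of M — if and only if b^α = p and P(s) = 1/(1 + λ(1-s)^α) for all s ∈ (0,1), i.e., M is discrete Mittag-Leffler DML(λ,α). -/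
open Real Set Filter

-- Auxiliary: the key convergence along the iterates of the thinning map.
lemma aux_tendsto_DML (b p α lam : ℝ)
    (hb : b ∈ Set.Ioo (0 : ℝ) 1) (hp : p ∈ Set.Ioo (0 : ℝ) 1)
    (hα : α ∈ Set.Ioc (0 : ℝ) 1) (hlam : 0 < lam)
    (P : ℝ → ℝ) (hP : ∀ s ∈ Set.Ioo (0 : ℝ) 1, P s ∈ Set.Ioc (0 : ℝ) 1)
    (hlim : Filter.Tendsto (fun s : ℝ => (1 - P s) / (1 - s) ^ α)
      (nhdsWithin 1 (Set.Iio 1)) (nhds lam))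
    (h : ∀ s ∈ Set.Ioo (0 : ℝ) 1,
        P s = p * P (1 - b + b * s) / (1 - (1 - p) * P (1 - b + b * s)))
    (s : ℝ) (hs : s ∈ Set.Ioo (0 : ℝ) 1) :
    Filter.Tendsto
      (fun n : ℕ => ((1 - P s) / (P s * (1 - s) ^ α)) * (p / b ^ α) ^ n)
      Filter.atTop (nhds lam) := by
  obtain ⟨hb0, hb1⟩ := hb
  obtain ⟨hp0, hp1⟩ := hp
  obtain ⟨hα0, hα1⟩ := hα
  obtain ⟨hs0, hs1⟩ := hs
  set u : ℝ := 1 - s with hu_def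
  have hu0 : 0 < u := by simp [hu_def]; linarith
  have hu1 : u < 1 := by simp [hu_def]; linarith
  -- the iterates
  set a : ℕ → ℝ := fun n => 1 - b ^ n * u with ha_def
  have hbn0 : ∀ n : ℕ, (0:ℝ) < b ^ n := fun n => pow_pos hb0 n
  have hbn1 : ∀ n : ℕ, b ^ n ≤ 1 := fun n => pow_le_one₀ hb0.le hb1.le
  have ha : ∀ n, a n ∈ Set.Ioo (0:ℝ) 1 := by
    intro n
    constructor
    · have : b ^ n * u < 1 := by nlinarith [hbn0 n, hbn1 n]
      simp [ha_def]; linarith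
    · have : 0 < b ^ n * u := mul_pos (hbn0 n) hu0
      simp [ha_def]; linarith
  have ha0 : a 0 = s := by simp [ha_def, hu_def]
  -- functional-equation step for the ratio G = (1-P)/P
  have hstep : ∀ x ∈ Set.Ioo (0:ℝ) 1,
      (1 - P (1 - b + b * x)) / P (1 - b + b * x) = p * ((1 - P x) / P x) := by
    intro x hx
    have hTx : (1 - b + b * x) ∈ Set.Ioo (0:ℝ) 1 := by
      constructor
      · nlinarith [hx.1, hx.2]
      · nlinarith [hx.1, hx.2]
    have hq := hP _ hTx
    have hq0 : 0 < P (1 - b + b * x) := hq.1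
    have hq1 : P (1 - b + b * x) ≤ 1 := hq.2
    have hPx := hP x hx
    have hPx0 : 0 < P x := hPx.1
    have hden : 0 < 1 - (1 - p) * P (1 - b + b * x) := by nlinarith
    have hkey := h x hx
    rw [eq_div_iff hden.ne'] at hkey
    have hR : p * ((1 - P x) / P x) = p * (1 - P x) / P x := by ring
    rw [hR, div_eq_div_iff hq0.ne' hPx0.ne']
    linear_combination hkey
  -- iterate the step
  have hind : ∀ n : ℕ, (1 - P (a n)) / P (a n) = p ^ n * ((1 - P s) / P s) := by
    intro n
    induction n with
    | zero => simp [ha0]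
    | succ n ih =>
      have harec : a (n + 1) = 1 - b + b * a n := by simp [ha_def]; ring
      rw [harec, hstep (a n) (ha n), ih]
      ring
  -- a n → 1 from below
  have hA : Filter.Tendsto a Filter.atTop (nhdsWithin 1 (Set.Iio 1)) := by
    rw [tendsto_nhdsWithin_iff]
    constructor
    · have h1 : Filter.Tendsto (fun n : ℕ => b ^ n) Filter.atTop (nhds 0) :=
        tendsto_pow_atTop_nhds_zero_of_lt_one hb0.le hb1
      have := (tendsto_const_nhds (α := ℕ) (f := Filter.atTop) (x := (1:ℝ))).sub
        (h1.mul_const u)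
      simpa using this
    · exact Filter.Eventually.of_forall fun n => (ha n).2
  have hL : Filter.Tendsto (fun n : ℕ => (1 - P (a n)) / (1 - a n) ^ α)
      Filter.atTop (nhds lam) := hlim.comp hA
  -- (1 - a n)^α = (b^α)^n * u^α
  have hpowb : ∀ n : ℕ, ((b:ℝ) ^ n) ^ α = (b ^ α) ^ n := by
    intro n
    induction n with
    | zero => simp
    | succ n ih =>
      rw [pow_succ, Real.mul_rpow (pow_nonneg hb0.le n) hb0.le, ih, pow_succ]
  have hv : ∀ n : ℕ, (1 - a n) ^ α = (b ^ α) ^ n * u ^ α := by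
    intro n
    have : 1 - a n = b ^ n * u := by simp [ha_def]
    rw [this, Real.mul_rpow (hbn0 n).le hu0.le, hpowb n]
  have hbα0 : 0 < b ^ α := Real.rpow_pos_of_pos hb0 α
  have hbα1 : b ^ α < 1 := Real.rpow_lt_one hb0.le hb1 hα0
  have huα0 : 0 < u ^ α := Real.rpow_pos_of_pos hu0 α
  -- (1 - a n)^α → 0
  have hv0 : Filter.Tendsto (fun n : ℕ => (1 - a n) ^ α) Filter.atTop (nhds 0) := by
    have h1 : Filter.Tendsto (fun n : ℕ => (b ^ α) ^ n) Filter.atTop (nhds 0) :=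
      tendsto_pow_atTop_nhds_zero_of_lt_one hbα0.le hbα1
    have := h1.mul_const (u ^ α)
    rw [zero_mul] at this
    exact this.congr fun n => (hv n).symm
  -- P (a n) → 1
  have hP1 : Filter.Tendsto (fun n : ℕ => P (a n)) Filter.atTop (nhds 1) := by
    have hprod := hL.mul hv0
    rw [mul_zero] at hprod
    have heq : ∀ n : ℕ, (1 - P (a n)) / (1 - a n) ^ α * (1 - a n) ^ α
        = 1 - P (a n) := by
      intro n
      have hpos : (0:ℝ) < (1 - a n) ^ α := Real.rpow_pos_of_pos (by linarith [(ha n).2]) α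
      field_simp
    have hprod' : Filter.Tendsto (fun n : ℕ => 1 - P (a n)) Filter.atTop (nhds 0) :=
      hprod.congr fun n => heq n
    have := (tendsto_const_nhds (α := ℕ) (f := Filter.atTop) (x := (1:ℝ))).sub hprod'
    simpa using this
  -- combine
  have hfinal := hL.div hP1 one_ne_zero
  rw [div_one] at hfinal
  refine hfinal.congr fun n => ?_
  simp only [Pi.div_apply]
  have hPan := hP (a n) (ha n)
  have hPan0 : (0:ℝ) < P (a n) := hPan.1
  have h1an : (0:ℝ) < 1 - a n := by linarith [(ha n).2]
  have h1anα : (0:ℝ) < (1 - a n) ^ α := Real.rpow_pos_of_pos h1an α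
  have hPs := hP s ⟨hs0, hs1⟩
  have hPs0 : (0:ℝ) < P s := hPs.1
  have hind' : 1 - P (a n) = p ^ n * ((1 - P s) / P s) * P (a n) := by
    have := hind n
    field_simp at this ⊢
    linarith [this]
  rw [hind', hv n]
  have hpn : (p / b ^ α) ^ n = p ^ n / (b ^ α) ^ n := div_pow p (b ^ α) n
  rw [hpn]
  field_simp

/-- A variable `M` with PGF `P` satisfying `(1-P(s))/(1-s)^α → λ` as `s → 1⁻` is
distributed as a geometric(p) sum of i.i.d. Bernoulli(b)-thinnings of itself, i.e.
`P(s) = pP(1-b+bs)/(1-(1-p)P(1-b+bs))` on `(0,1)`, iff `b^α = p` and `M` is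
discrete Mittag-Leffler DML(λ,α), i.e. `P(s) = 1/(1+λ(1-s)^α)`. -/
theorem geometric_sum_thinnings_iff_DML (b p α lam : ℝ)
    (hb : b ∈ Set.Ioo (0 : ℝ) 1) (hp : p ∈ Set.Ioo (0 : ℝ) 1)
    (hα : α ∈ Set.Ioc (0 : ℝ) 1) (hlam : 0 < lam)
    (P : ℝ → ℝ) (hP : ∀ s ∈ Set.Ioo (0 : ℝ) 1, P s ∈ Set.Ioc (0 : ℝ) 1)
    (hlim : Filter.Tendsto (fun s : ℝ => (1 - P s) / (1 - s) ^ α)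
      (nhdsWithin 1 (Set.Iio 1)) (nhds lam)) :
    (∀ s ∈ Set.Ioo (0 : ℝ) 1,
        P s = p * P (1 - b + b * s) / (1 - (1 - p) * P (1 - b + b * s))) ↔
      (b ^ α = p ∧
        ∀ s ∈ Set.Ioo (0 : ℝ) 1, P s = 1 / (1 + lam * (1 - s) ^ α)) := by
  obtain ⟨hb0, hb1⟩ := hb
  obtain ⟨hp0, hp1⟩ := hp
  obtain ⟨hα0, hα1⟩ := hα
  have hbα0 : 0 < b ^ α := Real.rpow_pos_of_pos hb0 α
  constructor
  · intro h
    have main : ∀ s ∈ Set.Ioo (0:ℝ) 1,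
        b ^ α = p ∧ P s = 1 / (1 + lam * (1 - s) ^ α) := by
      intro s hs
      have ht := aux_tendsto_DML b p α lam ⟨hb0, hb1⟩ ⟨hp0, hp1⟩ ⟨hα0, hα1⟩ hlam
        P hP hlim h s hs
      set C : ℝ := (1 - P s) / (P s * (1 - s) ^ α) with hC_def
      set r : ℝ := p / b ^ α with hr_def
      have hPs := hP s hs
      have huα0 : (0:ℝ) < (1 - s) ^ α :=
        Real.rpow_pos_of_pos (by linarith [hs.2]) α
      have hC0 : 0 ≤ C := by
        apply div_nonneg
        · linarith [hPs.2]
        · exact (mul_pos hPs.1 huα0).le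
      -- r = 1
      have hr1 : r = 1 := by
        have h2 : Filter.Tendsto (fun n : ℕ => C * r ^ (n + 1))
            Filter.atTop (nhds lam) := ht.comp (tendsto_add_atTop_nat 1)
        have h3 : Filter.Tendsto (fun n : ℕ => C * r ^ (n + 1))
            Filter.atTop (nhds (r * lam)) := by
          have := ht.const_mul r
          exact this.congr fun n => by ring
        have heq : r * lam = lam := tendsto_nhds_unique h3 h2
        have : r * lam = 1 * lam := by rw [heq]; ring
        exact mul_right_cancel₀ hlam.ne' this
      have hbp : b ^ α = p := by
        rw [hr_def] at hr1
        field_simp at hr1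
        linarith [hr1]
      refine ⟨hbp, ?_⟩
      -- C = lam
      have hC : C = lam := by
        have : Filter.Tendsto (fun _ : ℕ => C) Filter.atTop (nhds lam) := by
          refine ht.congr fun n => ?_
          rw [hr1]; simp
        exact tendsto_nhds_unique tendsto_const_nhds this
      rw [hC_def] at hC
      rw [div_eq_iff (mul_pos hPs.1 huα0).ne'] at hC
      have d1 : (0:ℝ) < 1 + lam * (1 - s) ^ α := by nlinarith
      rw [eq_div_iff d1.ne']
      nlinarith [hC]
    refine ⟨(main (1/2) (by norm_num)).1, fun s hs => (main s hs).2⟩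
  · rintro ⟨hbp, hform⟩ s hs
    have hs' : (1 - b + b * s) ∈ Set.Ioo (0:ℝ) 1 := by
      constructor
      · nlinarith [hs.1, hs.2]
      · nlinarith [hs.1, hs.2]
    have hu0 : (0:ℝ) < 1 - s := by linarith [hs.2]
    have huα0 : (0:ℝ) < (1 - s) ^ α := Real.rpow_pos_of_pos hu0 α
    have hbsα : (1 - (1 - b + b * s)) ^ α = p * (1 - s) ^ α := by
      have h1 : 1 - (1 - b + b * s) = b * (1 - s) := by ring
      rw [h1, Real.mul_rpow hb0.le hu0.le, hbp]
    rw [hform s hs, hform _ hs', hbsα]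
    have d1 : (0:ℝ) < 1 + lam * (1 - s) ^ α := by nlinarith
    have d2 : (0:ℝ) < 1 + lam * (p * (1 - s) ^ α) := by nlinarith
    have d3 : (0:ℝ) < 1 - (1 - p) * (1 / (1 + lam * (p * (1 - s) ^ α))) := by
      have hlt : (1 - p) * (1 / (1 + lam * (p * (1 - s) ^ α))) < 1 := by
        rw [mul_one_div, div_lt_one d2]
        nlinarith
      linarith
    rw [eq_div_iff d3.ne']
    field_simp
    ring
end

section
/- Let b, p, p0 ∈ (0,1) with p ≠ p0, let α ∈ (0,1], λ > 0, and let P : (0,1) → (0,1] satisfy lim_{s→1^-} (1 - P(s))/(1-s)^α = λ. Then p0·P(s)/(1 - (1-p0)·P(s)) = p·P(1-b+bs)/(1 - (1-p)·P(1-b+bs)) for all s ∈ (0,1) — i.e., a geometric(p0) sum of independent copies of M is distributed as a geometric(p) sum of i.i.d. Bernoulli(b)-thinnings of M — if and only if b^α = p/p0 and P(s) = 1/(1 + λ(1-s)^α) for all s ∈ (0,1). In particular the equation forces p < p0. -/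
/-!
In terms of the odds `Q = (1 - P) / P`, the pgf of a geometric(p) sum is `p / (p + Q)`, so the
equation says `Q (1 - b + b s) = (p / p₀) Q s`: the function `f x = Q (1 - x)` satisfies
`f (b x) = (p / p₀) f x`. Iterating, `f (bⁿ x) / (bⁿ x)^α = (p / (p₀ b^α))ⁿ · f x / x^α`, and
the left side tends to `λ ≠ 0` because `P → 1` at `1⁻`, so `Q` and `1 - P` behave alike there.
A geometric sequence with a nonzero limit is constant, which forces `b^α = p / p₀` (hence
`p < p₀`) and `f x = λ x^α`, i.e. `P` is DML(λ, α). Conversely, the DML odds `λ (1 - s)^α` satisfy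
the equation as soon as `b^α = p / p₀`.
-/

open Real Set Filter

open Topology

noncomputable def odds (x : ℝ) : ℝ := (1 - x) / x

noncomputable def geomCompound (p x : ℝ) : ℝ := p * x / (1 - (1 - p) * x)

lemma odds_nonneg {x : ℝ} (hx : x ∈ Ioc 0 1) : 0 ≤ odds x :=
  div_nonneg (sub_nonneg.2 hx.2) hx.1.le

lemma odds_eq_iff {x q : ℝ} (hx : x ≠ 0) : odds x = q ↔ x = 1 / (1 + q) := by
  unfold odds
  constructor
  · rintro rfl
    field_simp
    ring
  · intro h
    have hq : 1 + q ≠ 0 := by rintro hq; simp [hq] at h; exact hx h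
    rw [h]
    field_simp
    ring

lemma geomCompound_eq {p x : ℝ} (hx : x ≠ 0) : geomCompound p x = p / (p + odds x) := by
  unfold geomCompound odds
  rw [← div_div_eq_mul_div]
  congr 1
  field_simp
  ring

lemma geomCompound_eq_geomCompound_iff {p q x y : ℝ} (hp : 0 < p) (hq : 0 < q)
    (hx : x ∈ Ioc 0 1) (hy : y ∈ Ioc 0 1) :
    geomCompound q x = geomCompound p y ↔ odds y = p / q * odds x := by
  rw [geomCompound_eq hx.1.ne', geomCompound_eq hy.1.ne',
    div_eq_div_iff (by linarith [odds_nonneg hx]) (by linarith [odds_nonneg hy])]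
  constructor <;> intro h
  · field_simp
    linarith
  · field_simp at h
    linarith

lemma one_sub_add_mul_mem_Ioo {b s : ℝ} (hb : b ∈ Ioc (0 : ℝ) 1) (hs : s ∈ Ioo (0 : ℝ) 1) :
    1 - b + b * s ∈ Ioo (0 : ℝ) 1 :=
  ⟨by nlinarith [mul_pos hb.1 hs.1, hb.2], by nlinarith [mul_pos hb.1 (sub_pos.2 hs.2)]⟩

lemma eq_one_and_eq_of_tendsto_pow_mul {K : Type*} [Field K] [TopologicalSpace K]
    [ContinuousMul K] [T2Space K] {r a L : K} (hL : L ≠ 0)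
    (h : Tendsto (fun n : ℕ => r ^ n * a) atTop (𝓝 L)) : r = 1 ∧ a = L := by
  have hshift : Tendsto (fun n : ℕ => r * (r ^ n * a)) atTop (𝓝 L) := by
    refine (h.comp (tendsto_add_atTop_nat 1)).congr fun n => ?_
    simp only [Function.comp_apply, pow_succ', mul_assoc]
  have hr : r * L = L := tendsto_nhds_unique (h.const_mul r) hshift
  obtain rfl : r = 1 := by simpa [hL] using hr
  exact ⟨rfl, by simpa using h⟩

lemma tendsto_one_sub_nhdsGT_zero : Tendsto (fun x : ℝ => 1 - x) (𝓝[>] 0) (𝓝[<] 1) := by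
  refine tendsto_nhdsWithin_of_tendsto_nhds_of_eventually_within _ ?_ ?_
  · exact ((continuous_sub_left 1).tendsto' 0 1 (sub_zero 1)).mono_left nhdsWithin_le_nhds
  · filter_upwards [self_mem_nhdsWithin] with x hx
    simpa using hx

lemma tendsto_odds_div_of_tendsto_one_sub_div {ι : Type*} {l : Filter ι} {P g : ι → ℝ}
    {L : ℝ} (hg : Tendsto g l (𝓝 0)) (hg0 : ∀ᶠ i in l, g i ≠ 0)
    (h : Tendsto (fun i => (1 - P i) / g i) l (𝓝 L)) :
    Tendsto (fun i => odds (P i) / g i) l (𝓝 L) := by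
  have hP : Tendsto P l (𝓝 1) := by
    have h' := tendsto_const_nhds (x := (1 : ℝ)).sub (h.mul hg)
    rw [mul_zero, sub_zero] at h'
    refine h'.congr' ?_
    filter_upwards [hg0] with i hi
    rw [div_mul_cancel₀ _ hi, sub_sub_cancel]
  have h' := h.div hP one_ne_zero
  rw [div_one] at h'
  refine h'.congr fun i => ?_
  simp only [Pi.div_apply, odds, div_right_comm]

theorem eq_rpow_and_eq_mul_rpow_of_apply_mul_eq_mul {f : ℝ → ℝ} {b c α L : ℝ} (hb0 : 0 < b)
    (hb1 : b < 1) (hL : L ≠ 0) (hf : ∀ x ∈ Ioo (0 : ℝ) 1, f (b * x) = c * f x)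
    (hlim : Tendsto (fun x => f x / x ^ α) (𝓝[>] 0) (𝓝 L)) :
    c = b ^ α ∧ ∀ x ∈ Ioo (0 : ℝ) 1, f x = L * x ^ α := by
  have key : ∀ x ∈ Ioo (0 : ℝ) 1, c / b ^ α = 1 ∧ f x / x ^ α = L := by
    intro x hx
    have hmem : ∀ n : ℕ, b ^ n * x ∈ Ioo (0 : ℝ) 1 := fun n =>
      ⟨by have := hx.1; positivity,
        by nlinarith [pow_le_one₀ hb0.le hb1.le (n := n), pow_pos hb0 n, hx.1, hx.2]⟩
    have hiter : ∀ n : ℕ, f (b ^ n * x) = c ^ n * f x := by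
      intro n
      induction n with
      | zero => simp
      | succ n ih => rw [pow_succ', mul_assoc, hf _ (hmem n), ih, pow_succ', mul_assoc]
    have hseq : Tendsto (fun n : ℕ => b ^ n * x) atTop (𝓝[>] 0) := by
      refine tendsto_nhdsWithin_of_tendsto_nhds_of_eventually_within _ ?_
        (Eventually.of_forall fun n => (hmem n).1)
      simpa using (tendsto_pow_atTop_nhds_zero_of_lt_one hb0.le hb1).mul_const x
    refine eq_one_and_eq_of_tendsto_pow_mul hL ((hlim.comp hseq).congr fun n => ?_)
    simp only [Function.comp_apply]
    rw [hiter, mul_rpow (pow_nonneg hb0.le n) hx.1.le, ← rpow_pow_comm hb0.le, div_pow]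
    field_simp
  refine ⟨?_, fun x hx => ?_⟩
  · exact (div_eq_one_iff_eq (rpow_pos_of_pos hb0 α).ne').1 (key (1 / 2) (by norm_num)).1
  · have hxα : x ^ α ≠ 0 := (rpow_pos_of_pos hx.1 α).ne'
    rw [← (key x hx).2]
    field_simp

theorem eq_rpow_and_odds_eq_mul_rpow {P : ℝ → ℝ} {b c α L : ℝ} (hb0 : 0 < b) (hb1 : b < 1)
    (hα : 0 < α) (hL : L ≠ 0)
    (hP : ∀ s ∈ Ioo (0 : ℝ) 1, odds (P (1 - b + b * s)) = c * odds (P s))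
    (hlim : Tendsto (fun s => (1 - P s) / (1 - s) ^ α) (𝓝[<] 1) (𝓝 L)) :
    c = b ^ α ∧ ∀ s ∈ Ioo (0 : ℝ) 1, odds (P s) = L * (1 - s) ^ α := by
  have hlim' : Tendsto (fun x => odds (P (1 - x)) / x ^ α) (𝓝[>] 0) (𝓝 L) := by
    refine tendsto_odds_div_of_tendsto_one_sub_div ?_ ?_ ?_
    · simpa [zero_rpow hα.ne'] using
        (continuousAt_rpow_const 0 α (Or.inr hα.le)).tendsto.mono_left nhdsWithin_le_nhds
    · filter_upwards [self_mem_nhdsWithin] with x hx using (rpow_pos_of_pos hx α).ne'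
    · simpa only [Function.comp_def, sub_sub_cancel] using
        hlim.comp tendsto_one_sub_nhdsGT_zero
  have hfun : ∀ x ∈ Ioo (0 : ℝ) 1, odds (P (1 - b * x)) = c * odds (P (1 - x)) := by
    intro x hx
    simpa [mul_sub, ← sub_add] using hP (1 - x) ⟨by linarith [hx.2], by linarith [hx.1]⟩
  obtain ⟨hc, hf⟩ := eq_rpow_and_eq_mul_rpow_of_apply_mul_eq_mul
    (f := fun x => odds (P (1 - x))) hb0 hb1 hL hfun hlim'
  exact ⟨hc, fun s hs => by simpa using hf (1 - s) ⟨by linarith [hs.2], by linarith [hs.1]⟩⟩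

theorem two_geometric_sums_iff_DML_general (b p p0 α lam : ℝ)
    (hb : b ∈ Set.Ioo (0 : ℝ) 1) (hp : p ∈ Set.Ioo (0 : ℝ) 1)
    (hp0 : p0 ∈ Set.Ioo (0 : ℝ) 1)
    (hα : α ∈ Set.Ioc (0 : ℝ) 1) (hlam : 0 < lam)
    (P : ℝ → ℝ) (hP : ∀ s ∈ Set.Ioo (0 : ℝ) 1, P s ∈ Set.Ioc (0 : ℝ) 1)
    (hlim : Filter.Tendsto (fun s : ℝ => (1 - P s) / (1 - s) ^ α)
      (nhdsWithin 1 (Set.Iio 1)) (nhds lam)) :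
    ((∀ s ∈ Set.Ioo (0 : ℝ) 1,
        p0 * P s / (1 - (1 - p0) * P s)
          = p * P (1 - b + b * s) / (1 - (1 - p) * P (1 - b + b * s))) ↔
      (b ^ α = p / p0 ∧
        ∀ s ∈ Set.Ioo (0 : ℝ) 1, P s = 1 / (1 + lam * (1 - s) ^ α))) ∧
    ((∀ s ∈ Set.Ioo (0 : ℝ) 1,
        p0 * P s / (1 - (1 - p0) * P s)
          = p * P (1 - b + b * s) / (1 - (1 - p) * P (1 - b + b * s))) → p < p0) := by
  obtain ⟨hb0, hb1⟩ := hb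
  have hthin : ∀ s ∈ Ioo (0 : ℝ) 1, 1 - b + b * s ∈ Ioo (0 : ℝ) 1 := fun s hs =>
    one_sub_add_mul_mem_Ioo ⟨hb0, hb1.le⟩ hs
  have hodds : ∀ s ∈ Ioo (0 : ℝ) 1, p0 * P s / (1 - (1 - p0) * P s)
      = p * P (1 - b + b * s) / (1 - (1 - p) * P (1 - b + b * s)) ↔
      odds (P (1 - b + b * s)) = p / p0 * odds (P s) := fun s hs =>
    geomCompound_eq_geomCompound_iff hp.1 hp0.1 (hP s hs) (hP _ (hthin s hs))
  have hDML : ∀ s ∈ Ioo (0 : ℝ) 1,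
      P s = 1 / (1 + lam * (1 - s) ^ α) ↔ odds (P s) = lam * (1 - s) ^ α :=
    fun s hs => (odds_eq_iff (hP s hs).1.ne').symm
  have hforward : (∀ s ∈ Ioo (0 : ℝ) 1, p0 * P s / (1 - (1 - p0) * P s)
      = p * P (1 - b + b * s) / (1 - (1 - p) * P (1 - b + b * s))) →
      b ^ α = p / p0 ∧ ∀ s ∈ Ioo (0 : ℝ) 1, P s = 1 / (1 + lam * (1 - s) ^ α) := by
    intro heq
    obtain ⟨hc, hQ⟩ := eq_rpow_and_odds_eq_mul_rpow hb0 hb1 hα.1 hlam.ne'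
      (fun s hs => (hodds s hs).1 (heq s hs)) hlim
    exact ⟨hc.symm, fun s hs => (hDML s hs).2 (hQ s hs)⟩
  refine ⟨⟨hforward, ?_⟩, fun h => ?_⟩
  · rintro ⟨hbα, hdml⟩ s hs
    rw [hodds s hs, (hDML s hs).1 (hdml s hs), (hDML _ (hthin s hs)).1 (hdml _ (hthin s hs)),
      show 1 - (1 - b + b * s) = b * (1 - s) by ring, mul_rpow hb0.le (by linarith [hs.2]), hbα]
    ring
  · have hlt : p / p0 < 1 := (hforward h).1 ▸ rpow_lt_one hb0.le hb1 hα.1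
    exact (div_lt_one hp0.1).1 hlt

/-- A geometric(p₀) sum of independent copies of `M` is distributed as a
geometric(p) sum of i.i.d. Bernoulli(b)-thinnings of `M`, i.e.
`p₀P(s)/(1-(1-p₀)P(s)) = pP(1-b+bs)/(1-(1-p)P(1-b+bs))` on `(0,1)`, iff
`b^α = p/p₀` and `M` is DML(λ,α). In particular the equation forces `p < p₀`. -/
theorem two_geometric_sums_iff_DML (b p p0 α lam : ℝ)
    (hb : b ∈ Set.Ioo (0 : ℝ) 1) (hp : p ∈ Set.Ioo (0 : ℝ) 1)
    (hp0 : p0 ∈ Set.Ioo (0 : ℝ) 1) (hne : p ≠ p0)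
    (hα : α ∈ Set.Ioc (0 : ℝ) 1) (hlam : 0 < lam)
    (P : ℝ → ℝ) (hP : ∀ s ∈ Set.Ioo (0 : ℝ) 1, P s ∈ Set.Ioc (0 : ℝ) 1)
    (hlim : Filter.Tendsto (fun s : ℝ => (1 - P s) / (1 - s) ^ α)
      (nhdsWithin 1 (Set.Iio 1)) (nhds lam)) :
    ((∀ s ∈ Set.Ioo (0 : ℝ) 1,
        p0 * P s / (1 - (1 - p0) * P s)
          = p * P (1 - b + b * s) / (1 - (1 - p) * P (1 - b + b * s))) ↔
      (b ^ α = p / p0 ∧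
        ∀ s ∈ Set.Ioo (0 : ℝ) 1, P s = 1 / (1 + lam * (1 - s) ^ α))) ∧
    ((∀ s ∈ Set.Ioo (0 : ℝ) 1,
        p0 * P s / (1 - (1 - p0) * P s)
          = p * P (1 - b + b * s) / (1 - (1 - p) * P (1 - b + b * s))) → p < p0) :=
  two_geometric_sums_iff_DML_general b p p0 α lam hb hp hp0 hα hlam P hP hlim
end
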